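/- Fix an integer m ≥ 2. Let F be a file placement on a Ferrers board B, let l be a level containing n ≥ 2 rooks of F, and let c be the column of one of the rooks of F in level l whose column intersects level l in all m cells. Let F̂ be the file placement obtained by deleting that rook, and for 1 ≤ i ≤ m let F_i be the file placement obtained from F̂ by adding a rook in column c and the i-th row of level l. Then Σ_{i=1}^{m} wt_m(F_i) = m(2 - n) · wt_m(F̂). -/
import Mathlib


open scoped Classical

/-- The falling factorial `x↓ₖ = ∏_{i=0}^{k-1} (x - i)`. -/
noncomputable def ffall (x : ℝ) (k : ℕ) : ℝ := ∏ i ∈ Finset.range k, (x - i)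

/-- The `m`-falling factorial `x↓_{k,m} = ∏_{i=0}^{k-1} (x - m·i)`. -/
noncomputable def mfall (x : ℝ) (m k : ℕ) : ℝ := ∏ i ∈ Finset.range k, (x - m * i)

/-- The predicate that `b 0 ≤ b 1 ≤ ... ≤ b (n-1)`, i.e. the column heights of a
Ferrers board with `n` columns are weakly increasing.  (Column `i`, for `0 ≤ i < n`,
corresponds to column `i+1` = `b_{i+1}` of the paper.) -/
def FerrersMono (n : ℕ) (b : ℕ → ℕ) : Prop := ∀ i, i + 1 < n → b i ≤ b (i + 1)

/-- The cells of the Ferrers board with column heights `b 0, …, b (n-1)`: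
pairs `(i, j)` with `i < n` (a column, 0-indexed) and `1 ≤ j ≤ b i` (a row, 1-indexed). -/
def cellFinset (n : ℕ) (b : ℕ → ℕ) : Finset (ℕ × ℕ) :=
  (Finset.range n ×ˢ Finset.Icc 1 ((Finset.range n).sup b)).filter fun p => p.2 ≤ b p.1

/-- The file placements of `k` rooks on the board: `k` cells, no two in the same column. -/
def filePlacements (n : ℕ) (b : ℕ → ℕ) (k : ℕ) : Finset (Finset (ℕ × ℕ)) :=
  (cellFinset n b).powerset.filter fun P =>
    P.card = k ∧ ∀ p ∈ P, ∀ q ∈ P, p ≠ q → p.1 ≠ q.1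

/-- The `k`-th rook number `r_k(B)`: the number of placements of `k` cells of the board,
no two in the same row or column. -/
def rookNum (n : ℕ) (b : ℕ → ℕ) (k : ℕ) : ℕ :=
  ((cellFinset n b).powerset.filter fun P =>
    P.card = k ∧ ∀ p ∈ P, ∀ q ∈ P, p ≠ q → p.1 ≠ q.1 ∧ p.2 ≠ q.2).card

/-- The (0-indexed) level of the (1-indexed) row `j`: level `t` (0-indexed) consists of
rows `t*m + 1, …, t*m + m`. -/
def levelOf (m j : ℕ) : ℕ := (j - 1) / m

/-- The `k`-th `m`-level rook number `r_{k,m}(B)`: the number of placements of `k` cells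
of the board, no two in the same column or in the same level. -/
def mLevelRookNum (m n : ℕ) (b : ℕ → ℕ) (k : ℕ) : ℕ :=
  ((cellFinset n b).powerset.filter fun P =>
    P.card = k ∧ ∀ p ∈ P, ∀ q ∈ P, p ≠ q →
      p.1 ≠ q.1 ∧ levelOf m p.2 ≠ levelOf m q.2).card

/-- A placement has no two cells in the same level. -/
def NoLevelRepeat (m : ℕ) (F : Finset (ℕ × ℕ)) : Prop :=
  ∀ p ∈ F, ∀ q ∈ F, p ≠ q → levelOf m p.2 ≠ levelOf m q.2

/-- The `m`-weight of a file placement `F`: the product over all rows `j` of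
`1↓_{f_j, m}` where `f_j` is the number of cells of `F` in row `j`.  (Rows containing
no cell of `F` contribute `1↓_{0,m} = 1`, so it suffices to take the product over the
rows meeting `F`.) -/
noncomputable def wtm (m : ℕ) (F : Finset (ℕ × ℕ)) : ℝ :=
  ∏ j ∈ F.image Prod.snd, mfall 1 m ((F.filter fun p => p.2 = j).card)

/-- The `k`-th `m`-weighted file placement number `f_{k,m}(B)`. -/
noncomputable def fWeightNum (m n : ℕ) (b : ℕ → ℕ) (k : ℕ) : ℝ :=
  ∑ F ∈ filePlacements n b k, wtm m F

/-- The `m`-floor of `b`: the largest multiple of `m` that is at most `b`. -/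
def mfloor (m b : ℕ) : ℕ := m * (b / m)

/-- A singleton board (w.r.t. `m`): a Ferrers board such that whenever column `i` has
nonzero remainder mod `m`, the `m`-floor strictly increases at the next column. -/
def IsSingletonBoard (m n : ℕ) (b : ℕ → ℕ) : Prop :=
  FerrersMono n b ∧ ∀ i, i + 1 < n → b i - mfloor m (b i) ≠ 0 →
    mfloor m (b i) < mfloor m (b (i + 1))

/-- The cells of `F` lying in level `l` (0-indexed). -/
def rooksInLevel (m : ℕ) (F : Finset (ℕ × ℕ)) (l : ℕ) : Finset (ℕ × ℕ) :=
  F.filter fun p => levelOf m p.2 = l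

/-- `l` is the distinguished level of `F`: it contains at least two cells of `F`,
it has the fewest cells among all levels containing at least two cells of `F`,
and it is the lowest such level (any lower level with at least two cells of `F`
contains strictly more of them). -/
def DistinguishedLevel (m : ℕ) (F : Finset (ℕ × ℕ)) (l : ℕ) : Prop :=
  2 ≤ (rooksInLevel m F l).card ∧
  (∀ l', 2 ≤ (rooksInLevel m F l').card →
    (rooksInLevel m F l).card ≤ (rooksInLevel m F l').card) ∧
  (∀ l' < l, 2 ≤ (rooksInLevel m F l').card →
    (rooksInLevel m F l).card < (rooksInLevel m F l').card)

/-- The class `𝓟(F₀)` of a file placement `F₀` with distinguished level `l`: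
all file placements on the board with the same number of rooks as `F₀` which agree
with `F₀` outside level `l`, whose rooks in level `l` occupy the same columns as those
of `F₀`, and whose leftmost rook in level `l` occupies the same cell as the leftmost
rook of `F₀` in level `l`. -/
def classOf (m n : ℕ) (b : ℕ → ℕ) (l : ℕ) (F₀ : Finset (ℕ × ℕ)) :
    Finset (Finset (ℕ × ℕ)) :=
  (filePlacements n b F₀.card).filter fun F =>
    (F.filter fun p => levelOf m p.2 ≠ l) = (F₀.filter fun p => levelOf m p.2 ≠ l) ∧
    (rooksInLevel m F l).image Prod.fst = (rooksInLevel m F₀ l).image Prod.fst ∧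
    ∀ p ∈ rooksInLevel m F l, (∀ q ∈ rooksInLevel m F l, p.1 ≤ q.1) → p ∈ F₀

lemma levelOf_eq_iff' (m l j : ℕ) (hm : 1 ≤ m) (hj : 1 ≤ j) :
    levelOf m j = l ↔ l*m+1 ≤ j ∧ j ≤ l*m+m := by
  unfold levelOf
  have h1 := Nat.div_add_mod (j-1) m
  have h2 := Nat.mod_lt (j-1) (show 0 < m by omega)
  constructor
  · rintro rfl
    rw [mul_comm]
    omega
  · rintro ⟨ha, hb⟩
    exact Nat.div_eq_of_lt_le (by omega) (by rw [Nat.succ_mul]; omega)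

lemma wtm_insert' (m : ℕ) (G : Finset (ℕ × ℕ)) (p : ℕ × ℕ) (hp : p ∉ G) :
    wtm m (insert p G) =
      (1 - (m : ℝ) * ((G.filter fun q => q.2 = p.2).card : ℝ)) * wtm m G := by
  classical
  unfold wtm
  have himg : (insert p G).image Prod.snd = insert p.2 (G.image Prod.snd) :=
    Finset.image_insert _ _ _
  have hfilter : ∀ j, j ≠ p.2 →
      ((insert p G).filter fun q => q.2 = j) = G.filter fun q => q.2 = j := by
    intro j hj
    rw [Finset.filter_insert, if_neg (fun h => hj h.symm)]
  have hfp : ((insert p G).filter fun q => q.2 = p.2)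
      = insert p (G.filter fun q => q.2 = p.2) := by
    rw [Finset.filter_insert, if_pos rfl]
  have hpnot : p ∉ G.filter fun q => q.2 = p.2 :=
    fun h => hp (Finset.mem_filter.mp h).1
  by_cases hmem : p.2 ∈ G.image Prod.snd
  · rw [himg, Finset.insert_eq_self.mpr hmem]
    rw [← Finset.mul_prod_erase _ _ hmem, ← Finset.mul_prod_erase _ _ hmem]
    have h1 : ∀ j ∈ (G.image Prod.snd).erase p.2,
        mfall 1 m (((insert p G).filter fun q => q.2 = j).card)
          = mfall 1 m ((G.filter fun q => q.2 = j).card) := by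
      intro j hj
      rw [hfilter j (Finset.ne_of_mem_erase hj)]
    rw [Finset.prod_congr rfl h1, hfp, Finset.card_insert_of_notMem hpnot,
      mfall, Finset.prod_range_succ, ← mfall]
    ring
  · rw [himg, Finset.prod_insert hmem]
    have hzero : (G.filter fun q => q.2 = p.2) = ∅ := by
      rw [Finset.filter_eq_empty_iff]
      intro q hq h
      exact hmem (Finset.mem_image.mpr ⟨q, hq, h⟩)
    have h1 : ∀ j ∈ G.image Prod.snd,
        mfall 1 m (((insert p G).filter fun q => q.2 = j).card)
          = mfall 1 m ((G.filter fun q => q.2 = j).card) := by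
      intro j hj
      rw [hfilter j (fun h => hmem (h ▸ hj))]
    rw [Finset.prod_congr rfl h1, hfp, hzero]
    simp [mfall]

/-- inductive step computation.  Let `m ≥ 2`, let `F` be a file
placement on a Ferrers board `B`, let `l` be a level containing `k ≥ 2` rooks of `F`,
and let `r` be a rook of `F` in level `l` whose column intersects level `l` in all `m`
cells.  Writing `F̂ = F \ {r}` and letting `F_i` be obtained from `F̂` by adding a rook
in `r`'s column and the `i`-th row of level `l` (row `l*m + i`), we have
`Σ_{i=1}^m wt_m(F_i) = m(2 - k)·wt_m(F̂)`. -/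
theorem statement11 (m : ℕ) (hm : 2 ≤ m) (n : ℕ) (b : ℕ → ℕ)
    (hb : FerrersMono n b) (F : Finset (ℕ × ℕ))
    (hF : F ∈ filePlacements n b F.card)
    (l k : ℕ) (hk : (rooksInLevel m F l).card = k) (hk2 : 2 ≤ k)
    (r : ℕ × ℕ) (hr : r ∈ rooksInLevel m F l)
    (hfull : l * m + m ≤ b r.1) :
    ∑ i ∈ Finset.Icc 1 m, wtm m (insert (r.1, l * m + i) (F.erase r)) =
      (m : ℝ) * (2 - (k : ℝ)) * wtm m (F.erase r) := by
  classical
  rw [filePlacements, Finset.mem_filter, Finset.mem_powerset] at hF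
  obtain ⟨hsub, -, hcol⟩ := hF
  rw [rooksInLevel, Finset.mem_filter] at hr
  obtain ⟨hrF, hrl⟩ := hr
  set G := F.erase r with hG
  have hGsub : G ⊆ F := Finset.erase_subset _ _
  have hGrows : ∀ p ∈ G, 1 ≤ p.2 := by
    intro p hp
    have := hsub (hGsub hp)
    rw [cellFinset, Finset.mem_filter, Finset.mem_product, Finset.mem_Icc] at this
    exact this.1.2.1
  have hnotin : ∀ i : ℕ, (r.1, l * m + i) ∉ G := by
    intro i h
    have hqF : ((r.1, l * m + i) : ℕ × ℕ) ∈ F := hGsub h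
    by_cases he : ((r.1, l * m + i) : ℕ × ℕ) = r
    · exact Finset.notMem_erase r F (by rwa [he] at h)
    · exact hcol _ hqF r hrF he rfl
  have hstep : ∀ i ∈ Finset.Icc 1 m,
      wtm m (insert (r.1, l * m + i) G) =
        (1 - (m : ℝ) * ((G.filter fun q => q.2 = l * m + i).card : ℝ)) * wtm m G := by
    intro i _
    exact wtm_insert' m G _ (hnotin i)
  rw [Finset.sum_congr rfl hstep, ← Finset.sum_mul]
  congr 1
  -- count the rooks of G in level l
  have hsumcount : ∑ i ∈ Finset.Icc 1 m, (G.filter fun q => q.2 = l * m + i).card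
      = k - 1 := by
    have hmaps : ∀ q ∈ G.filter fun q => levelOf m q.2 = l,
        (fun q : ℕ × ℕ => q.2 - l * m) q ∈ Finset.Icc 1 m := by
      intro q hq
      rw [Finset.mem_filter] at hq
      have := (levelOf_eq_iff' m l q.2 (by omega) (hGrows q hq.1)).mp hq.2
      rw [Finset.mem_Icc]
      dsimp only
      omega
    have hfib := Finset.card_eq_sum_card_fiberwise hmaps
    have hfibers : ∀ i ∈ Finset.Icc 1 m,
        ((G.filter fun q => levelOf m q.2 = l).filter fun q => q.2 - l * m = i).card
          = (G.filter fun q => q.2 = l * m + i).card := by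
      intro i hi
      rw [Finset.mem_Icc] at hi
      congr 1
      ext q
      simp only [Finset.mem_filter, and_assoc]
      constructor
      · rintro ⟨hq, hlev, hsub2⟩
        have := (levelOf_eq_iff' m l q.2 (by omega) (hGrows q hq)).mp hlev
        exact ⟨hq, by omega⟩
      · rintro ⟨hq, hq2⟩
        refine ⟨hq, (levelOf_eq_iff' m l q.2 (by omega) (hGrows q hq)).mpr
          (by omega), by omega⟩
    rw [Finset.sum_congr rfl hfibers] at hfib
    rw [← hfib]
    have hGl : (G.filter fun q => levelOf m q.2 = l) = (rooksInLevel m F l).erase r := by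
      rw [hG, rooksInLevel, Finset.filter_erase]
    have hrmem : r ∈ rooksInLevel m F l := Finset.mem_filter.mpr ⟨hrF, hrl⟩
    rw [hGl, Finset.card_erase_of_mem hrmem, hk]
  have hcast : ∑ i ∈ Finset.Icc 1 m, ((G.filter fun q => q.2 = l * m + i).card : ℝ)
      = ((k : ℝ) - 1) := by
    rw [← Nat.cast_sum, hsumcount]
    have h1 : (1 : ℕ) ≤ k := by omega
    push_cast [h1]
    ring
  rw [Finset.sum_sub_distrib, Finset.sum_const, ← Finset.mul_sum, hcast,
    Nat.card_Icc]
  simp only [nsmul_eq_mul, mul_one]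
  push_cast
  ring
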